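/- Let X = (X_1, …, X_m) be an associated random vector and let x_1, …, x_m be real numbers. Then P(X_j > x_j for all 1 ≤ j ≤ m) − ∏_{j=1}^m P(X_j > x_j) ≤ Σ_{1 ≤ j < k ≤ m} ( P(X_j > x_j, X_k > x_k) − P(X_j > x_j) P(X_k > x_k) ). -/

import Mathlib

open MeasureTheory

/-- A random vector `X = (X_1, …, X_m)` is associated if `Cov[h₁(X), h₂(X)] ≥ 0` for every
pair of functions `h₁, h₂ : ℝ^m → ℝ` that are nondecreasing in every coordinate and such that
`h₁(X), h₂(X) ∈ L²`. -/
def IsAssociated {Ω : Type*} [MeasurableSpace Ω] (μ : Measure Ω) {m : ℕ}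
    (X : Fin m → Ω → ℝ) : Prop :=
  ∀ h₁ h₂ : (Fin m → ℝ) → ℝ,
    (∀ x y : Fin m → ℝ, (∀ i, x i ≤ y i) → h₁ x ≤ h₁ y) →
    (∀ x y : Fin m → ℝ, (∀ i, x i ≤ y i) → h₂ x ≤ h₂ y) →
    MemLp (fun ω => h₁ fun i => X i ω) 2 μ →
    MemLp (fun ω => h₂ fun i => X i ω) 2 μ →
    0 ≤ ∫ ω, ((h₁ fun i => X i ω) - ∫ ω', (h₁ fun i => X i ω') ∂μ) *
        ((h₂ fun i => X i ω) - ∫ ω', (h₂ fun i => X i ω') ∂μ) ∂μ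

/-!
The events `A j = {x j < X j}` are increasing, and association makes any two increasing events
positively correlated; increasing events are moreover closed under `∩` and `∪`. For such a
family the covariance `c(u, s) = P(u ∩ s) - P(u) P(s)` is subadditive in `s` under
intersection, since by inclusion–exclusion `c(u, s) + c(u, t) - c(u, s ∩ t) = c(u, s ∪ t) ≥ 0`.
Adding the events smallest index first, with `D` the intersection of the later ones,
`P(A a ∩ D) - P(A a) ∏ = c(A a, D) + P(A a) (P(D) - ∏)`: the first term is at most
`∑ c(A a, A k)`, and the second at most `P(D) - ∏` because this is nonnegative and `P(A a) ≤ 1`.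
-/

section

open Set ProbabilityTheory

variable {Ω ι : Type*}

lemma Sublattice.biInter_mem (L : Sublattice (Set Ω)) {S : Finset ι} {A : ι → Set Ω}
    (huniv : univ ∈ L) (hA : ∀ j ∈ S, A j ∈ L) : ⋂ j ∈ S, A j ∈ L := by
  classical
  induction S using Finset.induction_on with
  | empty => simpa using huniv
  | insert a S _ ih =>
    rw [Finset.set_biInter_insert]
    exact L.inf_mem (hA a (by simp)) (ih fun j hj => hA j (by simp [hj]))

namespace MeasureTheory

variable [MeasurableSpace Ω] {μ : Measure Ω}

lemma measureReal_inter_inter_sub_mul_le [IsFiniteMeasure μ] {s t u : Set Ω}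
    (ht : MeasurableSet t) (hu : MeasurableSet u)
    (h : μ.real u * μ.real (s ∪ t) ≤ μ.real (u ∩ (s ∪ t))) :
    μ.real (u ∩ (s ∩ t)) - μ.real u * μ.real (s ∩ t) ≤
      (μ.real (u ∩ s) - μ.real u * μ.real s) + (μ.real (u ∩ t) - μ.real u * μ.real t) := by
  have hst := measureReal_union_add_inter (μ := μ) (s := s) ht
  have hust := measureReal_union_add_inter (μ := μ) (s := u ∩ s) (hu.inter ht)
  rw [← inter_union_distrib_left, inter_inter_inter_comm, inter_self] at hust
  linear_combination h - μ.real u * hst + hust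

structure Sublattice.PositivelyCorrelated (L : Sublattice (Set Ω)) (μ : Measure Ω) : Prop where
  measurableSet : ∀ s ∈ L, MeasurableSet s
  univ_mem : univ ∈ L
  measureReal_mul_le : ∀ s ∈ L, ∀ t ∈ L, μ.real s * μ.real t ≤ μ.real (s ∩ t)

namespace Sublattice.PositivelyCorrelated

variable [IsProbabilityMeasure μ] {L : Sublattice (Set Ω)} {A : ι → Set Ω}

lemma prod_measureReal_le_measureReal_biInter (hL : L.PositivelyCorrelated μ) {S : Finset ι}
    (hA : ∀ j ∈ S, A j ∈ L) : ∏ j ∈ S, μ.real (A j) ≤ μ.real (⋂ j ∈ S, A j) := by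
  classical
  induction S using Finset.induction_on with
  | empty => simp
  | insert a S ha ih =>
    have hS : ∀ j ∈ S, A j ∈ L := fun j hj => hA j (by simp [hj])
    rw [Finset.prod_insert ha, Finset.set_biInter_insert]
    calc μ.real (A a) * ∏ j ∈ S, μ.real (A j) ≤ μ.real (A a) * μ.real (⋂ j ∈ S, A j) :=
          mul_le_mul_of_nonneg_left (ih hS) measureReal_nonneg
      _ ≤ _ := hL.measureReal_mul_le _ (hA a (by simp)) _ (L.biInter_mem hL.univ_mem hS)

lemma measureReal_inter_biInter_sub_le_sum (hL : L.PositivelyCorrelated μ) {u : Set Ω}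
    (hu : u ∈ L) {S : Finset ι} (hA : ∀ j ∈ S, A j ∈ L) :
    μ.real (u ∩ ⋂ j ∈ S, A j) - μ.real u * μ.real (⋂ j ∈ S, A j) ≤
      ∑ j ∈ S, (μ.real (u ∩ A j) - μ.real u * μ.real (A j)) := by
  classical
  induction S using Finset.induction_on with
  | empty => simp
  | insert a S haS ih =>
    have hS : ∀ j ∈ S, A j ∈ L := fun j hj => hA j (by simp [hj])
    have ha : A a ∈ L := hA a (by simp)
    have hD := L.biInter_mem hL.univ_mem hS
    rw [Finset.sum_insert haS, Finset.set_biInter_insert]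
    refine (measureReal_inter_inter_sub_mul_le (hL.measurableSet _ hD) (hL.measurableSet _ hu)
      (hL.measureReal_mul_le _ hu _ (L.sup_mem ha hD))).trans ?_
    linarith [ih hS]

lemma measureReal_biInter_sub_prod_le [LinearOrder ι] (hL : L.PositivelyCorrelated μ)
    {S : Finset ι} (hA : ∀ j ∈ S, A j ∈ L) :
    μ.real (⋂ j ∈ S, A j) - ∏ j ∈ S, μ.real (A j) ≤
      ∑ j ∈ S, ∑ k ∈ S.filter (fun k => j < k),
        (μ.real (A j ∩ A k) - μ.real (A j) * μ.real (A k)) := by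
  induction S using Finset.induction_on_min with
  | empty => simp
  | insert a S haS ih =>
    have hS : ∀ j ∈ S, A j ∈ L := fun j hj => hA j (by simp [hj])
    have ha : A a ∈ L := hA a (by simp)
    have hnotin : a ∉ S := fun h => lt_irrefl a (haS a h)
    have hfilter_a : (insert a S).filter (fun k => a < k) = S := by
      rw [Finset.filter_insert, if_neg (lt_irrefl a), Finset.filter_true_of_mem haS]
    have hfilter_j : ∀ j ∈ S, (insert a S).filter (fun k => j < k) = S.filter (fun k => j < k) :=
      fun j hj => by rw [Finset.filter_insert, if_neg (haS j hj).asymm]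
    rw [Finset.set_biInter_insert, Finset.prod_insert hnotin, Finset.sum_insert hnotin, hfilter_a,
      Finset.sum_congr rfl fun j hj => congrArg (Finset.sum · _) (hfilter_j j hj)]
    have hcov := hL.measureReal_inter_biInter_sub_le_sum ha hS
    have hprod := hL.prod_measureReal_le_measureReal_biInter hS
    have hscale : μ.real (A a) * (μ.real (⋂ j ∈ S, A j) - ∏ j ∈ S, μ.real (A j)) ≤
        μ.real (⋂ j ∈ S, A j) - ∏ j ∈ S, μ.real (A j) :=
      mul_le_of_le_one_left (sub_nonneg.2 hprod) measureReal_le_one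
    linarith [ih hS]

end Sublattice.PositivelyCorrelated
end MeasureTheory

lemma IsUpperSet.monotone_indicator_one {α : Type*} [Preorder α] {U : Set α}
    (hU : IsUpperSet U) : Monotone (U.indicator (1 : α → ℝ)) := by
  intro a b hab
  by_cases ha : a ∈ U
  · simp [ha, hU hab ha]
  · simp [ha, Set.indicator_nonneg]

def increasingEvents {α : Type*} [Preorder α] [MeasurableSpace α] (Y : Ω → α) :
    Sublattice (Set Ω) where
  carrier := {s | ∃ U, IsUpperSet U ∧ MeasurableSet U ∧ Y ⁻¹' U = s}
  supClosed' := by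
    rintro _ ⟨U, hU, hUm, rfl⟩ _ ⟨V, hV, hVm, rfl⟩
    exact ⟨U ∪ V, hU.union hV, hUm.union hVm, rfl⟩
  infClosed' := by
    rintro _ ⟨U, hU, hUm, rfl⟩ _ ⟨V, hV, hVm, rfl⟩
    exact ⟨U ∩ V, hU.inter hV, hUm.inter hVm, rfl⟩

variable [MeasurableSpace Ω] {μ : Measure Ω} [IsProbabilityMeasure μ] {m : ℕ} {X : Fin m → Ω → ℝ}

lemma IsAssociated.measureReal_mul_le_inter (hXmeas : ∀ i, Measurable (X i))
    (hX : IsAssociated μ X) {U V : Set (Fin m → ℝ)} (hU : IsUpperSet U) (hV : IsUpperSet V)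
    (hUm : MeasurableSet U) (hVm : MeasurableSet V) :
    μ.real ((fun ω i => X i ω) ⁻¹' U) * μ.real ((fun ω i => X i ω) ⁻¹' V) ≤
      μ.real ((fun ω i => X i ω) ⁻¹' U ∩ (fun ω i => X i ω) ⁻¹' V) := by
  set Y : Ω → Fin m → ℝ := fun ω i => X i ω
  have hY : Measurable Y := measurable_pi_lambda _ hXmeas
  have hmemLp : ∀ W : Set (Fin m → ℝ), MeasurableSet W → MemLp ((Y ⁻¹' W).indicator 1) 2 μ :=
    fun W hW => memLp_indicator_const 2 (hY hW) (1 : ℝ) (Or.inr (measure_ne_top μ _))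
  have hcov : 0 ≤ cov[(Y ⁻¹' U).indicator 1, (Y ⁻¹' V).indicator 1; μ] :=
    hX _ _ (fun _ _ h => hU.monotone_indicator_one h) (fun _ _ h => hV.monotone_indicator_one h)
      (hmemLp U hUm) (hmemLp V hVm)
  rw [covariance_eq_sub (hmemLp U hUm) (hmemLp V hVm), ← inter_indicator_one,
    integral_indicator_one (hY hUm), integral_indicator_one (hY hVm),
    integral_indicator_one ((hY hUm).inter (hY hVm))] at hcov
  linarith

lemma IsAssociated.positivelyCorrelated (hXmeas : ∀ i, Measurable (X i))
    (hX : IsAssociated μ X) : (increasingEvents fun ω i => X i ω).PositivelyCorrelated μ where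
  measurableSet := by
    rintro _ ⟨U, -, hUm, rfl⟩
    exact measurable_pi_lambda _ hXmeas hUm
  univ_mem := ⟨univ, isUpperSet_univ, MeasurableSet.univ, preimage_univ⟩
  measureReal_mul_le := by
    rintro _ ⟨U, hU, hUm, rfl⟩ _ ⟨V, hV, hVm, rfl⟩
    exact hX.measureReal_mul_le_inter hXmeas hU hV hUm hVm

end

/-- For an associated random vector `X = (X_1, …, X_m)` and reals `x_1, …, x_m`,
`P(∀ j, X_j > x_j) - ∏_j P(X_j > x_j)
  ≤ ∑_{j < k} (P(X_j > x_j, X_k > x_k) - P(X_j > x_j) P(X_k > x_k))`. -/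
theorem associated_joint_tail_bound
    {Ω : Type*} [MeasurableSpace Ω] (μ : Measure Ω) [IsProbabilityMeasure μ]
    {m : ℕ} (X : Fin m → Ω → ℝ) (hXmeas : ∀ i, Measurable (X i))
    (hX : IsAssociated μ X) (x : Fin m → ℝ) :
    (μ {ω | ∀ j, x j < X j ω}).toReal - ∏ j, (μ {ω | x j < X j ω}).toReal ≤
      ∑ j : Fin m, ∑ k ∈ Finset.univ.filter (fun k => j < k),
        ((μ {ω | x j < X j ω ∧ x k < X k ω}).toReal -
          (μ {ω | x j < X j ω}).toReal * (μ {ω | x k < X k ω}).toReal) := by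
  have htail : ∀ j, {ω | x j < X j ω} ∈ increasingEvents fun ω i => X i ω := fun j =>
    ⟨{v | x j < v j}, fun _ _ h hv => hv.trans_le (h j),
      measurableSet_lt measurable_const (measurable_pi_apply j), rfl⟩
  have hall : {ω | ∀ j, x j < X j ω} = ⋂ j ∈ Finset.univ, {ω | x j < X j ω} := by
    ext; simp
  rw [hall]
  -- `(μ s).toReal` is `μ.real s`, and `{ω | p ω ∧ q ω}` is `{ω | p ω} ∩ {ω | q ω}`, definitionally.
  exact (hX.positivelyCorrelated hXmeas).measureReal_biInter_sub_prod_le fun j _ => htail j
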